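/- arXiv:1101.4747 — 3 statements merged into one kernel-verified Lean document; each statement's English description precedes it below -/
import Mathlib

section
/- For every natural number n ≥ 1, the identity ∑_{i=1}^{n} (1/i) · C(2(i−1), i−1) · C(2(n+1−i), n+1−i) = 2 · C(2n, n−1) holds in the rational numbers. -/
/-!
Shifting the index, the sum is `∑_{j<n} C_j · binom(2(n-j), n-j)` with `C_j = binom(2j, j)/(j+1)`
the Catalan numbers. It telescopes: with `T j = (2(n-j)+1)/(n+1) · binom(2j, j) · binom(2(n-j), n-j)`
one has `T j - T (j+1) = C_j · binom(2(n-j), n-j)`, which follows from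
`(k+1) binom(2k+2, k+1) = 2(2k+1) binom(2k, k)`. Hence the sum is
`T 0 - T n = binom(2n+2, n+1)/2 - C_n = 2n/(n+1) · binom(2n, n) = 2 binom(2n, n-1)`.
-/

open Finset Nat

lemma cast_centralBinom_succ (k : ℕ) :
    (centralBinom (k + 1) : ℚ) = 2 * (2 * k + 1) * centralBinom k / (k + 1) := by
  rw [eq_div_iff (by positivity), mul_comm]
  exact_mod_cast succ_mul_centralBinom_succ k

lemma centralBinom_telescope_step (a b : ℕ) :
    ((2 * (b + 1) + 1) * centralBinom a * centralBinom (b + 1)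
        - (2 * b + 1) * centralBinom (a + 1) * centralBinom b : ℚ) / (a + b + 2)
      = centralBinom a / (a + 1) * centralBinom (b + 1) := by
  rw [cast_centralBinom_succ a, cast_centralBinom_succ b]
  field_simp
  ring

lemma sum_range_catalan_mul_centralBinom (n : ℕ) :
    ∑ j ∈ range n, (centralBinom j : ℚ) / (j + 1) * centralBinom (n - j)
      = centralBinom (n + 1) / 2 - centralBinom n / (n + 1) := by
  set T : ℕ → ℚ := fun j ↦
    (2 * (n - j : ℕ) + 1) * centralBinom j * centralBinom (n - j) / (n + 1) with hT
  have hstep : ∀ j ∈ range n,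
      (centralBinom j : ℚ) / (j + 1) * centralBinom (n - j) = T j - T (j + 1) := by
    intro j hj
    obtain ⟨b, rfl⟩ : ∃ b, n = j + b + 1 := ⟨n - j - 1, by simp at hj; omega⟩
    rw [hT, ← sub_div, show j + b + 1 - j = b + 1 by omega,
      show j + b + 1 - (j + 1) = b by omega, ← centralBinom_telescope_step]
    push_cast
    ring_nf
  rw [sum_congr rfl hstep, sum_range_sub', hT]
  simp only [Nat.sub_zero, Nat.sub_self, centralBinom_zero, cast_one, cast_zero,
    cast_centralBinom_succ n]
  field_simp
  ring

lemma centralBinom_div_eq_two_mul_choose_pred {n : ℕ} (hn : 1 ≤ n) :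
    (centralBinom (n + 1) : ℚ) / 2 - centralBinom n / (n + 1)
      = 2 * ((2 * n).choose (n - 1) : ℚ) := by
  obtain ⟨m, rfl⟩ : ∃ m, n = m + 1 := ⟨n - 1, by omega⟩
  have hchoose := choose_succ_right_eq (2 * (m + 1)) m
  rw [show 2 * (m + 1) - m = m + 2 by omega] at hchoose
  have hchoose_pred : ((2 * (m + 1)).choose m : ℚ)
      = (2 * (m + 1)).choose (m + 1) * (m + 1) / (m + 2) := by
    rw [eq_div_iff (by positivity)]
    exact_mod_cast hchoose.symm
  rw [cast_centralBinom_succ, centralBinom_eq_two_mul_choose, Nat.add_sub_cancel, hchoose_pred]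
  push_cast
  field_simp
  ring

theorem a_n_eval (n : ℕ) (hn : 1 ≤ n) :
    ∑ i ∈ Finset.Icc 1 n,
      (1 / (i : ℚ)) * ((2 * (i - 1)).choose (i - 1) : ℚ) *
        ((2 * (n + 1 - i)).choose (n + 1 - i) : ℚ)
      = 2 * ((2 * n).choose (n - 1) : ℚ) := by
  rw [← Ico_add_one_right_eq_Icc, sum_Ico_eq_sum_range, Nat.add_sub_cancel,
    ← centralBinom_div_eq_two_mul_choose_pred hn, ← sum_range_catalan_mul_centralBinom]
  refine sum_congr rfl fun j _ ↦ ?_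
  rw [show 1 + j - 1 = j by omega, show n + 1 - (1 + j) = n - j by omega,
    ← centralBinom_eq_two_mul_choose, ← centralBinom_eq_two_mul_choose]
  push_cast
  ring
end

section
/- Fix a natural number n ≥ 1 and let f(X) = (∑_{i=1}^{n} (1/i) · C(2(i−1), i−1) · X^i)^2, a polynomial with rational coefficients. Then the coefficient of X^{n+1} in the derivative f'(X) equals 2·a_n − 2·C(2n, n), where a_n = ∑_{i=1}^{n} (1/i) · C(2(i−1), i−1) · C(2(n+1−i), n+1−i). -/
/-! With `g = ∑ cᵢ Xⁱ`, `cᵢ = (1/i)·C(2(i-1), i-1)`, we have `f' = 2 g g'`, and `g'` is the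
truncated central binomial series `∑_{j<n} C(2j, j) Xʲ`. The coefficient of `X^{n+1}` in `g g'`
is therefore `a_n` with its `i = 1` term `c₁ · C(2n, n) = C(2n, n)` removed, because `g'` stops
at degree `n - 1`. -/

open Finset Polynomial

section Semiring

variable {R : Type*} [Semiring R]

theorem coeff_sum_C_mul_X_pow (s : Finset ℕ) (c : ℕ → R) (k : ℕ) :
    (∑ i ∈ s, C (c i) * X ^ i).coeff k = if k ∈ s then c k else 0 := by
  simp only [finsetSum_coeff, coeff_C_mul_X_pow, Finset.sum_ite_eq]

theorem coeff_sum_C_mul_X_pow_mul (s : Finset ℕ) (c : ℕ → R) (q : R[X]) (m : ℕ)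
    (hs : ∀ i ∈ s, i ≤ m) :
    ((∑ i ∈ s, C (c i) * X ^ i) * q).coeff m = ∑ i ∈ s, c i * q.coeff (m - i) := by
  rw [Finset.sum_mul, finsetSum_coeff]
  refine Finset.sum_congr rfl fun i hi => ?_
  rw [mul_assoc, coeff_C_mul, coeff_X_pow_mul', if_pos (hs i hi)]

end Semiring

theorem coeff_derivative_sum_inv_mul_centralBinom (n l : ℕ) :
    (derivative (∑ i ∈ Icc 1 n,
        C ((1 / (i : ℚ)) * ((2 * (i - 1)).choose (i - 1) : ℚ)) * (X : ℚ[X]) ^ i)).coeff l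
      = if l < n then ((2 * l).choose l : ℚ) else 0 := by
  rw [coeff_derivative, coeff_sum_C_mul_X_pow]
  by_cases hl : l < n
  · rw [if_pos (mem_Icc.mpr ⟨by omega, by omega⟩), if_pos hl, Nat.add_sub_cancel]
    push_cast
    field_simp
  · rw [if_neg (by simp only [mem_Icc]; omega), if_neg hl, zero_mul]

theorem coeff_derivative_f_n_add_one (n : ℕ) (hn : 1 ≤ n) :
    (Polynomial.derivative
        ((∑ i ∈ Finset.Icc 1 n,
          Polynomial.C ((1 / (i : ℚ)) * ((2 * (i - 1)).choose (i - 1) : ℚ)) *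
            (Polynomial.X : ℚ[X]) ^ i) ^ 2)).coeff (n + 1)
      = 2 * (∑ i ∈ Finset.Icc 1 n,
            (1 / (i : ℚ)) * ((2 * (i - 1)).choose (i - 1) : ℚ) *
              ((2 * (n + 1 - i)).choose (n + 1 - i) : ℚ))
        - 2 * ((2 * n).choose n : ℚ) := by
  rw [derivative_sq, mul_assoc, coeff_C_mul,
    coeff_sum_C_mul_X_pow_mul _ _ _ _ fun i hi => by simp only [mem_Icc] at hi; omega]
  simp only [coeff_derivative_sum_inv_mul_centralBinom]
  rw [← add_sum_Ioc_eq_sum_Icc hn, ← add_sum_Ioc_eq_sum_Icc hn,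
    sum_congr rfl fun i hi => by rw [if_pos (by simp only [mem_Ioc] at hi; omega)]]
  have first_coeff : (1 / ((1 : ℕ) : ℚ)) * ((2 * (1 - 1)).choose (1 - 1) : ℚ) = 1 := by norm_num
  rw [first_coeff, Nat.add_sub_cancel, if_neg (lt_irrefl n)]
  ring
end

section
/- For every natural number n ≥ 2, the identity 2·((1/(n+1))·C(2n, n) − (1/n)·C(2(n−1), n−1)) + ∑_{i=1}^{n−1} ((3(n−i)−1)/(2i(n−i+1))) · C(2(i−1), i−1) · C(2(n−i), n−i) = (3/2) · ∑_{i=1}^{n−1} (1/i) · C(2(i−1), i−1) · C(2(n−i), n−i) holds in the rational numbers. -/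
/-!
Since `C(2k, k) = (k + 1) Cat k`, the `i`-th summand on the right minus the `i`-th summand on the
left is `2 Cat (i - 1) Cat (n - i)`. By Segner's recurrence these differences add up to
`2 (Cat n - Cat (n - 1))`, which is exactly the boundary term `2 (C(2n, n)/(n+1) - C(2n-2, n-1)/n)`.
-/

open Finset

theorem sum_Icc_catalan_mul_catalan {n : ℕ} (hn : 0 < n) :
    ∑ i ∈ Icc 1 n, catalan (i - 1) * catalan (n - i) = catalan n := by
  obtain ⟨m, rfl⟩ : ∃ m, n = m + 1 := ⟨n - 1, by omega⟩
  rw [← Ico_add_one_right_eq_Icc, sum_Ico_eq_sum_range, catalan_succ,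
    Fin.sum_univ_eq_sum_range (fun i => catalan i * catalan (m - i))]
  refine sum_congr (by simp) fun j _ => ?_
  congr 2 <;> omega

theorem sum_Icc_pred_catalan_mul_catalan {n : ℕ} (hn : 0 < n) :
    ∑ i ∈ Icc 1 (n - 1), (catalan (i - 1) * catalan (n - i) : ℚ) =
      catalan n - catalan (n - 1) := by
  have h := sum_Icc_catalan_mul_catalan hn
  rw [← Nat.sub_add_cancel hn, sum_Icc_succ_top (by omega), Nat.sub_add_cancel hn] at h
  rw [eq_sub_iff_add_eq]
  exact_mod_cast (by simpa using h)

theorem choose_two_mul_self_eq_succ_mul_catalan (k : ℕ) :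
    ((2 * k).choose k : ℚ) = (k + 1) * catalan k := by
  exact_mod_cast (succ_mul_catalan_eq_centralBinom k).symm

theorem three_halves_mul_sub_summand {n i : ℕ} (hi : i ∈ Icc 1 (n - 1)) :
    3 / 2 * (1 / (i : ℚ) * ((2 * (i - 1)).choose (i - 1) : ℚ) *
        ((2 * (n - i)).choose (n - i) : ℚ))
      - (3 * ((n : ℚ) - i) - 1) / (2 * i * ((n : ℚ) - i + 1)) *
          ((2 * (i - 1)).choose (i - 1) : ℚ) * ((2 * (n - i)).choose (n - i) : ℚ)
      = 2 * (catalan (i - 1) * catalan (n - i)) := by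
  obtain ⟨hi1, hin⟩ := mem_Icc.mp hi
  have hi0 : (i : ℚ) ≠ 0 := Nat.cast_ne_zero.mpr (by omega)
  have hni : (0 : ℚ) < n - i + 1 := by
    have : (i : ℚ) ≤ n := by exact_mod_cast (by omega : i ≤ n)
    linarith
  simp only [choose_two_mul_self_eq_succ_mul_catalan]
  rw [Nat.cast_sub hi1, Nat.cast_sub (by omega), Nat.cast_one, sub_add_cancel]
  field_simp
  ring

theorem count_T1_simplification (n : ℕ) (hn : 2 ≤ n) :
    2 * ((1 / ((n : ℚ) + 1)) * ((2 * n).choose n : ℚ)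
          - (1 / (n : ℚ)) * ((2 * (n - 1)).choose (n - 1) : ℚ))
      + ∑ i ∈ Finset.Icc 1 (n - 1),
          ((3 * ((n : ℚ) - (i : ℚ)) - 1) / (2 * (i : ℚ) * ((n : ℚ) - (i : ℚ) + 1))) *
            ((2 * (i - 1)).choose (i - 1) : ℚ) * ((2 * (n - i)).choose (n - i) : ℚ)
      = (3 / 2) * ∑ i ∈ Finset.Icc 1 (n - 1),
          (1 / (i : ℚ)) * ((2 * (i - 1)).choose (i - 1) : ℚ) *
            ((2 * (n - i)).choose (n - i) : ℚ) := by
  have hdiff : 3 / 2 * ∑ i ∈ Icc 1 (n - 1),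
        1 / (i : ℚ) * ((2 * (i - 1)).choose (i - 1) : ℚ) * ((2 * (n - i)).choose (n - i) : ℚ)
      - ∑ i ∈ Icc 1 (n - 1), (3 * ((n : ℚ) - i) - 1) / (2 * i * ((n : ℚ) - i + 1)) *
          ((2 * (i - 1)).choose (i - 1) : ℚ) * ((2 * (n - i)).choose (n - i) : ℚ)
      = 2 * (catalan n - catalan (n - 1)) := by
    rw [mul_sum, ← sum_sub_distrib, sum_congr rfl fun i hi => three_halves_mul_sub_summand hi,
      ← mul_sum, sum_Icc_pred_catalan_mul_catalan (by omega)]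
  have hboundary : 1 / ((n : ℚ) + 1) * ((2 * n).choose n : ℚ)
      - 1 / (n : ℚ) * ((2 * (n - 1)).choose (n - 1) : ℚ) = catalan n - catalan (n - 1) := by
    have hn0 : (n : ℚ) ≠ 0 := Nat.cast_ne_zero.mpr (by omega)
    simp only [choose_two_mul_self_eq_succ_mul_catalan]
    rw [Nat.cast_sub (by omega), Nat.cast_one, sub_add_cancel]
    field_simp
  linarith
end
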